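/- arXiv:2006.04567 — 3 statements merged into one kernel-verified Lean document; each statement's English description precedes it below -/
import Mathlib

section
/- For every k ≥ 1, let B_k be the binary linear code of length 2^k − 1 generated by the k row vectors 1_1^{(k)}, …, 1_k^{(k)}, where 1_i^{(k)} ∈ (F_2)^{2^k − 1} has its first 2^i − 1 coordinates equal to 1 and all remaining coordinates equal to 0. Then B_k has dimension k, and for every integer w with 1 ≤ w ≤ 2^k − 1 there is exactly one codeword of B_k of Hamming weight w; in particular S(B_k) = {1, 2, …, 2^k − 1}, so B_k is a strictly compact MWS code. -/
open scoped Classical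
open Finset

/-- `qk q k = (q^k - 1)/(q - 1)`, the number of nonzero weights an MWS code of dimension `k`
over a field with `q` elements has. -/
def qk (q k : ℕ) : ℕ := (q ^ k - 1) / (q - 1)

/-- The set of nonzero Hamming weights of a linear code `C ⊆ F^n`. -/
noncomputable def weightSet {F : Type*} [Field F] [Fintype F] {n : ℕ}
    (C : Submodule F (Fin n → F)) : Finset ℕ :=
  Finset.image (fun c => hammingNorm c)
    (Finset.univ.filter fun c : Fin n → F => c ∈ C ∧ c ≠ 0)

/-- A code is non-degenerate if no coordinate is identically zero. -/
def Nondeg {F : Type*} [Field F] {n : ℕ} (C : Submodule F (Fin n → F)) : Prop :=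
  ∀ i : Fin n, ∃ c ∈ C, c i ≠ 0

/-- Maximum weight spectrum code of dimension `k`. -/
def IsMWS {F : Type*} [Field F] [Fintype F] {n : ℕ}
    (C : Submodule F (Fin n → F)) (k : ℕ) : Prop :=
  (weightSet C).card = qk (Fintype.card F) k

/-- The spread of an MWS code. -/
noncomputable def spread {F : Type*} [Field F] [Fintype F] {n : ℕ}
    (C : Submodule F (Fin n → F)) (k : ℕ) : ℤ :=
  (n : ℤ) * qk (Fintype.card F) k
    - ((qk (Fintype.card F) k * (qk (Fintype.card F) k - 1)) / 2 : ℕ)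
    - ∑ w ∈ weightSet C, (w : ℤ)

/-- A compact MWS code: the weight set is an interval of `q_k` consecutive integers starting
at the minimum distance. -/
def IsCompactMWS {F : Type*} [Field F] [Fintype F] {n : ℕ}
    (C : Submodule F (Fin n → F)) (k : ℕ) : Prop :=
  IsMWS C k ∧ ∃ d, d ∈ weightSet C ∧
    weightSet C = Finset.Icc d (d + qk (Fintype.card F) k - 1)

/-- A strictly compact MWS code: a compact MWS code whose length is itself a weight. -/
def IsStrictlyCompactMWS {F : Type*} [Field F] [Fintype F] {n : ℕ}
    (C : Submodule F (Fin n → F)) (k : ℕ) : Prop :=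
  IsCompactMWS C k ∧ n ∈ weightSet C

/-! Coordinate `j` lies in block `⌊log₂ (j + 1)⌋`, and block `t < k` has `2 ^ t` coordinates.
The generator `1_{i+1}` is the indicator of the blocks `0, …, i`; these indicators span all
block-constant vectors, so `B_k` is exactly the space of vectors constant on each block. A binary
block-constant vector with block values `s_0, …, s_{k-1}` has weight `∑ s_t 2 ^ t`, the number
with binary digits `s`, so the weight is a bijection from `B_k` onto `[0, 2 ^ k)`. -/

theorem Nat.lt_two_pow_succ_sub_one_iff_log_le (i j : ℕ) :
    j < 2 ^ (i + 1) - 1 ↔ Nat.log 2 (j + 1) ≤ i := by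
  rw [← Nat.lt_succ_iff, Nat.log_lt_iff_lt_pow one_lt_two j.succ_ne_zero]
  have := Nat.two_pow_pos (i + 1)
  omega

theorem hammingNorm_comp_eq_sum_card_fiber {ι κ β : Type*} [Fintype ι] [Fintype κ]
    [DecidableEq κ] [Zero β] [DecidableEq β] (s : κ → β) (b : ι → κ) :
    hammingNorm (s ∘ b) = ∑ t, if s t ≠ 0 then #{i | b i = t} else 0 := by
  rw [hammingNorm,
    card_eq_sum_card_fiberwise (f := b) (t := univ) fun _ _ => mem_coe.2 (mem_univ _)]
  refine sum_congr rfl fun t _ => ?_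
  rw [filter_filter]
  split_ifs with ht
  · exact congrArg card
      (filter_congr fun i _ => ⟨And.right, fun h => ⟨by simpa [h] using ht, h⟩⟩)
  · refine card_eq_zero.2 (filter_eq_empty_iff.2 fun i _ h => h.1 ?_)
    rw [Function.comp_apply, h.2]
    simpa using ht

theorem Pi.span_range_indicator_le_eq_top (R : Type*) [Ring R] (k : ℕ) :
    Submodule.span R (Set.range fun i : Fin k => fun t : Fin k => if t ≤ i then (1 : R) else 0)
      = ⊤ := by
  set S := Submodule.span R
    (Set.range fun i : Fin k => fun t : Fin k => if t ≤ i then (1 : R) else 0)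
  have hind (i : Fin k) : (fun t : Fin k => if t ≤ i then (1 : R) else 0) ∈ S :=
    Submodule.subset_span ⟨i, rfl⟩
  have hsingle (i : Fin k) : Pi.single i (1 : R) ∈ S := by
    rcases i with ⟨_ | i, hi⟩
    · convert hind ⟨0, hi⟩ using 1
      funext t
      simp [Pi.single_apply, Fin.le_def, Fin.ext_iff]
    · convert S.sub_mem (hind ⟨i + 1, hi⟩) (hind ⟨i, by omega⟩) using 1
      funext t
      simp only [Pi.single_apply, Fin.ext_iff, Fin.le_def, Pi.sub_apply]
      split_ifs <;> first | omega | simp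
  rw [eq_top_iff, ← (Pi.basisFun R (Fin k)).span_eq, Submodule.span_le]
  rintro _ ⟨i, rfl⟩
  simpa using hsingle i

theorem weightSet_eq_Icc_of_forall_exists {F : Type*} [Field F] [Fintype F] [DecidableEq F]
    {n : ℕ} (C : Submodule F (Fin n → F))
    (h : ∀ w, 1 ≤ w → w ≤ n → ∃ c ∈ C, hammingNorm c = w) :
    weightSet C = Icc 1 n := by
  -- `weightSet` is defined with the classical `DecidableEq F`.
  obtain rfl : ‹DecidableEq F› = fun a b => Classical.propDecidable (a = b) :=
    Subsingleton.elim _ _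
  ext w
  simp only [weightSet, mem_image, mem_filter, mem_univ, true_and, mem_Icc]
  constructor
  · rintro ⟨c, ⟨-, hc⟩, rfl⟩
    exact ⟨hammingNorm_pos_iff.2 hc,
      hammingNorm_le_card_fintype.trans_eq (Fintype.card_fin n)⟩
  · rintro ⟨h1, h2⟩
    obtain ⟨c, hc, rfl⟩ := h w h1 h2
    exact ⟨c, ⟨hc, hammingNorm_pos_iff.1 h1⟩, rfl⟩

theorem isStrictlyCompactMWS_of_weightSet_eq_Icc {F : Type*} [Field F] [Fintype F] {n k : ℕ}
    {C : Submodule F (Fin n → F)} (hn : 1 ≤ n) (hC : weightSet C = Icc 1 n)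
    (hq : qk (Fintype.card F) k = n) : IsStrictlyCompactMWS C k := by
  refine ⟨⟨?_, 1, ?_, ?_⟩, ?_⟩
  · rw [IsMWS, hC, hq, Nat.card_Icc, Nat.add_sub_cancel]
  · rw [hC, mem_Icc]; omega
  · rw [hC, hq, Nat.add_sub_cancel_left]
  · rw [hC, mem_Icc]; omega

theorem qk_two (k : ℕ) : qk 2 k = 2 ^ k - 1 := by
  simp [qk]

namespace BinaryBlockCode

def block {k : ℕ} (j : Fin (2 ^ k - 1)) : Fin k :=
  ⟨Nat.log 2 (j + 1), Nat.log_lt_of_lt_pow j.val.succ_ne_zero (by have := j.isLt; omega)⟩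

theorem block_surjective (k : ℕ) : Function.Surjective (block (k := k)) := by
  intro t
  have := Nat.pow_lt_pow_right one_lt_two t.isLt
  have := @Nat.one_le_two_pow t
  refine ⟨⟨2 ^ (t : ℕ) - 1, by omega⟩, Fin.ext ?_⟩
  simp [block, Nat.sub_add_cancel Nat.one_le_two_pow, Nat.log_pow]

theorem card_filter_block_eq {k : ℕ} (t : Fin k) :
    #{j : Fin (2 ^ k - 1) | block j = t} = 2 ^ (t : ℕ) := by
  have hle : 2 ^ ((t : ℕ) + 1) ≤ 2 ^ k := Nat.pow_le_pow_right two_pos t.isLt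
  have := @Nat.one_le_two_pow t
  rw [pow_succ] at hle
  have hrange : #{j : Fin (2 ^ k - 1) | block j = t}
      = #{j ∈ range (2 ^ k - 1) | Nat.log 2 (j + 1) = t} := by
    simp only [card_filter, block, Fin.ext_iff]
    exact Fin.sum_univ_eq_sum_range (fun j => if Nat.log 2 (j + 1) = t then 1 else 0) _
  have hIco : {j ∈ range (2 ^ k - 1) | Nat.log 2 (j + 1) = t}
      = Ico (2 ^ (t : ℕ) - 1) (2 ^ ((t : ℕ) + 1) - 1) := by
    ext j
    rw [mem_filter, mem_range, mem_Ico,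
      Nat.log_eq_iff (Or.inr ⟨one_lt_two, j.succ_ne_zero⟩), pow_succ]
    omega
  rw [hrange, hIco, Nat.card_Ico, pow_succ]
  omega

section Semiring

variable (R : Type*) [Semiring R] (k : ℕ)

def blockConst : (Fin k → R) →ₗ[R] (Fin (2 ^ k - 1) → R) :=
  LinearMap.funLeft R R block

theorem blockConst_injective : Function.Injective (blockConst R k) :=
  LinearMap.funLeft_injective_of_surjective _ _ _ (block_surjective k)

theorem prefixIndicator_eq_blockConst (i : Fin k) :
    (fun j : Fin (2 ^ k - 1) => if (j : ℕ) < 2 ^ ((i : ℕ) + 1) - 1 then (1 : R) else 0)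
      = blockConst R k fun t => if t ≤ i then 1 else 0 :=
  funext fun _ => if_congr (Nat.lt_two_pow_succ_sub_one_iff_log_le _ _) rfl rfl

end Semiring

theorem span_range_prefixIndicator_eq_range_blockConst (R : Type*) [Ring R] (k : ℕ) :
    Submodule.span R (Set.range fun (i : Fin k) => fun (j : Fin (2 ^ k - 1)) =>
        if (j : ℕ) < 2 ^ ((i : ℕ) + 1) - 1 then (1 : R) else 0)
      = LinearMap.range (blockConst R k) := by
  rw [funext (prefixIndicator_eq_blockConst R k), Set.range_comp', Submodule.span_image,
    Pi.span_range_indicator_le_eq_top, Submodule.map_top]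

def binaryValue (k : ℕ) : (Fin k → ZMod 2) ≃ Fin (2 ^ k) :=
  (Equiv.piCongrRight fun _ => (ZMod.finEquiv 2).symm.toEquiv).trans finFunctionFinEquiv

theorem binaryValue_apply {k : ℕ} (s : Fin k → ZMod 2) :
    (binaryValue k s : ℕ) = ∑ t, (s t).val * 2 ^ (t : ℕ) :=
  finFunctionFinEquiv_apply _

theorem hammingNorm_blockConst_zmod_two {k : ℕ} (s : Fin k → ZMod 2) :
    hammingNorm (blockConst (ZMod 2) k s) = binaryValue k s := by
  have hbit (x : ZMod 2) (a : ℕ) : (if x ≠ 0 then a else 0) = x.val * a := by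
    rcases (by revert x; decide : x = 0 ∨ x = 1) with rfl | rfl
    · simp
    · simp [show (1 : ZMod 2).val = 1 from rfl]
  change hammingNorm (s ∘ block) = _
  rw [hammingNorm_comp_eq_sum_card_fiber, binaryValue_apply]
  simp only [card_filter_block_eq, hbit]

theorem existsUnique_mem_range_blockConst_hammingNorm_eq {k w : ℕ} (hw : w < 2 ^ k) :
    ∃! c, c ∈ LinearMap.range (blockConst (ZMod 2) k) ∧ hammingNorm c = w := by
  obtain ⟨s, hs⟩ := (binaryValue k).surjective ⟨w, hw⟩
  refine ⟨blockConst _ k s, ⟨⟨s, rfl⟩, by rw [hammingNorm_blockConst_zmod_two, hs]⟩, ?_⟩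
  rintro _ ⟨⟨s', rfl⟩, hs'⟩
  have : binaryValue k s' = binaryValue k s :=
    Fin.ext (by rw [← hammingNorm_blockConst_zmod_two, hs', hs])
  rw [(binaryValue k).injective this]

end BinaryBlockCode

/-- For every $k ≥ 1$, the binary code $B_k$ of length $2^k-1$ generated by the
rows $1_1^{(k)},\dots,1_k^{(k)}$ (where $1_i^{(k)}$ has its first $2^i-1$ coordinates equal to
$1$ and the rest $0$) has dimension $k$, and for every $1 ≤ w ≤ 2^k-1$ there is exactly one
codeword of weight $w$; in particular $S(B_k) = \{1,\dots,2^k-1\}$ and $B_k$ is a strictly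
compact MWS code. -/
theorem stmt_1 (k : ℕ) (hk : 1 ≤ k)
    (B : Submodule (ZMod 2) (Fin (2 ^ k - 1) → ZMod 2))
    (hB : B = Submodule.span (ZMod 2)
      (Set.range fun (i : Fin k) => fun (j : Fin (2 ^ k - 1)) =>
        if (j : ℕ) < 2 ^ ((i : ℕ) + 1) - 1 then (1 : ZMod 2) else 0)) :
    Module.finrank (ZMod 2) B = k ∧
    (∀ w : ℕ, 1 ≤ w → w ≤ 2 ^ k - 1 →
      ∃! c : Fin (2 ^ k - 1) → ZMod 2, c ∈ B ∧ hammingNorm c = w) ∧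
    weightSet B = Finset.Icc 1 (2 ^ k - 1) ∧
    IsStrictlyCompactMWS B k := by
  rw [BinaryBlockCode.span_range_prefixIndicator_eq_range_blockConst] at hB
  subst hB
  have hlen : 1 < 2 ^ k := Nat.one_lt_two_pow (by omega)
  have hunique (w : ℕ) (_ : 1 ≤ w) (hw : w ≤ 2 ^ k - 1) :
      ∃! c, c ∈ LinearMap.range (BinaryBlockCode.blockConst (ZMod 2) k) ∧ hammingNorm c = w :=
    BinaryBlockCode.existsUnique_mem_range_blockConst_hammingNorm_eq (by omega)
  have hweights := weightSet_eq_Icc_of_forall_exists _ fun w h1 h2 => (hunique w h1 h2).exists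
  refine ⟨?_, hunique, hweights,
    isStrictlyCompactMWS_of_weightSet_eq_Icc (by omega) hweights (by rw [ZMod.card, qk_two])⟩
  rw [LinearMap.finrank_range_of_inj (BinaryBlockCode.blockConst_injective _ _),
    Module.finrank_fin_fun]
end

section
/- Let C be a non-degenerate [n,k]_q MWS code. Then 2·n·q_{k−1} = q·q_{k−1}·q_k + 2·Δ(C); that is, n = (q/2)·q_k + Δ(C)/q_{k−1}. -/
open scoped Classical
open Finset

/-!
A nonzero codeword `c` has the same weight as its `q - 1` nonzero multiples, so an MWS code,
with `q_k = (q^k - 1)/(q - 1)` distinct weights among its `q^k - 1` nonzero codewords, has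
exactly `q - 1` codewords of each weight. Hence `(q - 1) Σ_{w ∈ S(C)} w` is the total weight
of `C`, which for a non-degenerate code is `n (q^k - q^{k-1})`, each coordinate vanishing on a
hyperplane of `C`. So `Σ_{w ∈ S(C)} w = n q^{k-1}`, and the identity follows from
`q_k = q q_{k-1} + 1 = q_{k-1} + q^{k-1}`.
-/

open Module

theorem sub_one_mul_qk (q k : ℕ) : (q - 1) * qk q k = q ^ k - 1 :=
  Nat.mul_div_cancel' (by simpa using Nat.sub_dvd_pow_sub_pow q 1 k)

theorem qk_eq_sum_range {q : ℕ} (hq : 2 ≤ q) (k : ℕ) : qk q k = ∑ i ∈ range k, q ^ i :=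
  (Nat.geomSum_eq hq k).symm

theorem qk_succ {q : ℕ} (hq : 2 ≤ q) (k : ℕ) : qk q (k + 1) = q * qk q k + 1 := by
  simp only [qk_eq_sum_range hq, sum_range_succ', pow_succ', ← mul_sum, pow_zero]

theorem qk_succ' {q : ℕ} (hq : 2 ≤ q) (k : ℕ) : qk q (k + 1) = qk q k + q ^ k := by
  simp only [qk_eq_sum_range hq, sum_range_succ]

theorem Module.Dual.card_ker_mul_card {F V : Type*} [Field F] [Fintype F] [AddCommGroup V]
    [Module F V] [Fintype V] {f : Dual F V} (hf : f ≠ 0) :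
    Fintype.card (LinearMap.ker f) * Fintype.card F = Fintype.card V := by
  rw [card_eq_pow_finrank (K := F) (V := V), ← Dual.finrank_ker_add_one_of_ne_zero hf,
    pow_succ, card_eq_pow_finrank (K := F)]

section Code

variable {F : Type*} [Field F] [Fintype F] {n : ℕ} (C : Submodule F (Fin n → F))

theorem card_apply_ne_zero_mul_card (i : Fin n) (hi : ∃ c ∈ C, c i ≠ 0) :
    #{c : C | (c : Fin n → F) i ≠ 0} * Fintype.card F
      = (Fintype.card F - 1) * Fintype.card C := by
  set f : Dual F C := (LinearMap.proj i).comp C.subtype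
  have hf : f ≠ 0 := by
    obtain ⟨c, hc, hci⟩ := hi
    exact fun h => hci (LinearMap.congr_fun h ⟨c, hc⟩)
  have hker : #{c : C | (c : Fin n → F) i = 0} = Fintype.card (LinearMap.ker f) := by
    rw [← Fintype.card_subtype]; rfl
  have hsplit := card_filter_add_card_filter_not (s := (univ : Finset C))
    (p := fun c => (c : Fin n → F) i = 0)
  rw [card_univ, hker] at hsplit
  have hK := Dual.card_ker_mul_card hf
  have hA : #{c : C | (c : Fin n → F) i ≠ 0} = _ := Nat.eq_sub_of_add_eq' hsplit
  rw [hA, Nat.sub_mul, hK, Nat.sub_one_mul, mul_comm]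

theorem sum_hammingNorm_mul_card (hnd : Nondeg C) :
    (∑ c : C, hammingNorm (c : Fin n → F)) * Fintype.card F
      = n * ((Fintype.card F - 1) * Fintype.card C) := by
  simp only [hammingNorm, card_eq_sum_ones, sum_filter]
  rw [sum_comm, sum_mul]
  simp only [← sum_filter, ← card_eq_sum_ones, card_apply_ne_zero_mul_card C _ (hnd _)]
  simp

noncomputable def nonzeroCodewords : Finset (Fin n → F) := {c | c ∈ C ∧ c ≠ 0}

theorem weightSet_eq_image : weightSet C = (nonzeroCodewords C).image hammingNorm := rfl

theorem card_nonzeroCodewords : #(nonzeroCodewords C) = Fintype.card C - 1 := by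
  have : nonzeroCodewords C = ({c | c ∈ C} : Finset (Fin n → F)).erase 0 := by
    ext c; simp [nonzeroCodewords, and_comm]
  rw [this, card_erase_of_mem (by simp), ← Fintype.card_subtype]

theorem sum_nonzeroCodewords_hammingNorm :
    ∑ c ∈ nonzeroCodewords C, hammingNorm c = ∑ c : C, hammingNorm (c : Fin n → F) := by
  rw [nonzeroCodewords, ← filter_filter,
    sum_filter_of_ne fun c _ h => hammingNorm_ne_zero_iff.mp h]
  exact sum_subtype _ (by simp) _

theorem le_card_hammingNorm_fiber {w : ℕ} (hw : w ∈ weightSet C) :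
    Fintype.card F - 1 ≤ #{c ∈ nonzeroCodewords C | hammingNorm c = w} := by
  obtain ⟨c, hc, rfl⟩ := mem_image.mp hw
  simp only [mem_filter, mem_univ, true_and] at hc
  calc Fintype.card F - 1 = #{a : F | a ≠ 0} := by
        rw [filter_ne', card_erase_of_mem (mem_univ 0), card_univ]
    _ ≤ _ := by
      refine card_le_card_of_injOn (· • c) (fun a ha => ?_) fun a _ b _ hab =>
        smul_left_injective F hc.2 hab
      have ha : a ≠ 0 := (mem_filter.mp ha).2
      have hreg (i : Fin n) : IsSMulRegular F a := fun _ _ h => mul_left_cancel₀ ha h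
      simp [nonzeroCodewords, C.smul_mem a hc.1, hc.2, ha, hammingNorm_smul hreg]

theorem sub_one_mul_sum_weightSet_of_card_eq
    (h : (Fintype.card F - 1) * #(weightSet C) = #(nonzeroCodewords C)) :
    (Fintype.card F - 1) * ∑ w ∈ weightSet C, w
      = ∑ c ∈ nonzeroCodewords C, hammingNorm c := by
  have hfiber : ∀ w ∈ weightSet C,
      #{c ∈ nonzeroCodewords C | hammingNorm c = w} = Fintype.card F - 1 := by
    refine fun w hw =>
      ((sum_eq_sum_iff_of_le fun w hw => le_card_hammingNorm_fiber C hw).mp ?_ w hw).symm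
    rw [sum_const, smul_eq_mul, mul_comm, h, weightSet_eq_image,
      card_eq_sum_card_image (hammingNorm : (Fin n → F) → ℕ)]
  rw [sum_comp (s := nonzeroCodewords C) (fun w : ℕ => w) (hammingNorm : (Fin n → F) → ℕ),
    mul_sum, ← weightSet_eq_image]
  exact sum_congr rfl fun w hw => by rw [hfiber w hw, smul_eq_mul]

theorem sum_weightSet_mul_card_eq_of_isMWS {k : ℕ} (hdim : finrank F C = k) (hnd : Nondeg C)
    (hMWS : IsMWS C k) :
    (∑ w ∈ weightSet C, w) * Fintype.card F = n * Fintype.card F ^ k := by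
  have hq : 0 < Fintype.card F - 1 := Nat.sub_pos_of_lt Fintype.one_lt_card
  have hcard : Fintype.card C = Fintype.card F ^ k := by
    rw [card_eq_pow_finrank (K := F), hdim]
  have hsum := sub_one_mul_sum_weightSet_of_card_eq C (by
    rw [hMWS, sub_one_mul_qk, card_nonzeroCodewords, hcard])
  rw [sum_nonzeroCodewords_hammingNorm] at hsum
  apply Nat.eq_of_mul_eq_mul_left hq
  rw [← mul_assoc, hsum, sum_hammingNorm_mul_card C hnd, hcard]
  ring

end Code

/-- For a non-degenerate $[n,k]_q$ MWS code $C$,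
$2n·q_{k-1} = q·q_{k-1}·q_k + 2Δ(C)$, i.e. $n = (q/2)q_k + Δ(C)/q_{k-1}$. -/
theorem stmt_4 {F : Type*} [Field F] [Fintype F] {n k : ℕ}
    (C : Submodule F (Fin n → F))
    (hdim : Module.finrank F C = k)
    (hnd : Nondeg C)
    (hMWS : IsMWS C k) :
    2 * (n : ℤ) * qk (Fintype.card F) (k - 1) =
      (Fintype.card F : ℤ) * qk (Fintype.card F) (k - 1) * qk (Fintype.card F) k
        + 2 * spread C k := by
  rw [spread]
  set q := Fintype.card F
  rcases k with _ | m
  · have hS : weightSet C = ∅ := card_eq_zero.mp (by simpa [IsMWS, qk] using hMWS)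
    simp [qk, hS]
  have hq : 2 ≤ q := Fintype.one_lt_card
  have hsum : ∑ w ∈ weightSet C, w = n * q ^ m := by
    have h := sum_weightSet_mul_card_eq_of_isMWS C hdim hnd hMWS
    rw [pow_succ, ← mul_assoc] at h
    exact Nat.eq_of_mul_eq_mul_right (by omega) h
  have hQ1 : qk q (m + 1) - 1 = q * qk q m := by rw [qk_succ hq, Nat.add_sub_cancel]
  -- the halving in `spread` is exact since `q_k (q_k - 1)` is even
  have hT := Nat.div_two_mul_two_of_even (Nat.even_mul_pred_self (qk q (m + 1)))
  have hQ := qk_succ' hq m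
  rw [← Nat.cast_sum, hsum, Nat.add_sub_cancel]
  generalize qk q (m + 1) * (qk q (m + 1) - 1) / 2 = T at hT ⊢
  rw [hQ1] at hT
  push_cast
  zify at hT hQ
  linear_combination hT - 2 * (n : ℤ) * hQ
end

section
/- For every prime power q and every integer k ≥ 2, there exists an [n,k,d]_q MWS code with n = 2^{q_k} − 1 and d = 2^{q^{k−1} − 1} − 1. -/
open scoped Classical
open Finset

/-!
The code is a projective multiset code: its coordinates are the points `P` of `ℙ(F^k)`, each
repeated `m P` times, and the codeword of a functional `f` has weight `∑ m P` over the points off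
the hyperplane `ker f`. These point sets all have `s = q^(k-1)` elements and determine `ker f`, so
the code is MWS as soon as subsets of points of equal size have distinct total multiplicities.

Number the `N = q_k` points `0, …, N-1` and give point `i` the binary digit `i-1` if
`0 < i < N-1`, no digit if `i = 0`, and the two digits `N-2, N-1` if `i = N-1`. These blocks
partition `range N`, so the length is `2^N - 1`; by uniqueness of binary expansions two sets of
points with the same total agree off point `0`, hence agree if they have the same size. Placing the
complement of one hyperplane at `0, …, s-1` gives it weight `2^(s-1) - 1`, while the complement of
any other hyperplane contains a point of multiplicity at least `2^(s-1)`.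
-/

open Module Projectivization
open scoped LinearAlgebra.Projectivization

lemma Finset.eq_of_erase_eq_of_card_eq {α : Type*} [DecidableEq α] {s t : Finset α}
    {a : α} (h : s.erase a = t.erase a) (hc : #s = #t) : s = t := by
  by_cases hs : a ∈ s <;> by_cases ht : a ∈ t
  · rw [← insert_erase hs, ← insert_erase ht, h]
  · have := card_erase_add_one hs
    rw [h, erase_eq_of_notMem ht] at this
    omega
  · have := card_erase_add_one ht
    rw [← h, erase_eq_of_notMem hs] at this
    omega
  · rwa [erase_eq_of_notMem hs, erase_eq_of_notMem ht] at h

lemma Finset.exists_embedding_map_eq_range {α : Type*} [Fintype α] (A : Finset α) :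
    ∃ ι : α ↪ ℕ, univ.map ι = range (Fintype.card α) ∧ A.map ι = range #A := by
  have hcompl : Fintype.card {a // a ∉ A} = Fintype.card α - #A := by
    rw [Fintype.card_subtype_compl, Fintype.card_coe]
  let e : α ≃ Fin (Fintype.card α) :=
    (Equiv.sumCompl (· ∈ A)).symm.trans <|
      (A.equivFin.sumCongr (Fintype.equivFinOfCardEq hcompl)).trans <|
        finSumFinEquiv.trans (finCongr (Nat.add_sub_of_le (card_le_univ A)))
  have he (a : α) : (e a : ℕ) < #A ↔ a ∈ A := by
    by_cases ha : a ∈ A <;> simp [e, ha]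
  refine ⟨e.toEmbedding.trans Fin.valEmbedding, ?_, ?_⟩ <;> ext i <;>
    simp only [mem_map, mem_univ, true_and, mem_range, Function.Embedding.trans_apply,
      Equiv.coe_toEmbedding, Fin.valEmbedding_apply]
  · exact ⟨fun ⟨a, ha⟩ => ha ▸ (e a).isLt, fun hi => ⟨e.symm ⟨i, hi⟩, by simp⟩⟩
  · refine ⟨fun ⟨a, ha, hai⟩ => hai ▸ (he a).2 ha, fun hi => ?_⟩
    exact ⟨e.symm ⟨i, hi.trans_le (card_le_univ A)⟩, (he _).1 (by simpa), by simp⟩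

lemma Fintype.exists_card_fiber_eq {α : Type*} [Fintype α] (m : α → ℕ) {n : ℕ}
    (hn : ∑ a, m a = n) : ∃ σ : Fin n → α, ∀ a, #{j | σ j = a} = m a := by
  let e : (Σ a, Fin (m a)) ≃ Fin n := Fintype.equivFinOfCardEq (by simp [hn])
  refine ⟨fun j => (e.symm j).1, fun a => ?_⟩
  rw [← Fintype.card_subtype, ← Fintype.card_fin (m a)]
  exact Fintype.card_congr ((e.symm.subtypeEquiv fun _ => Iff.rfl).trans (Equiv.sigmaSubtype a))

namespace MWS

def digitBlock (N i : ℕ) : Finset ℕ :=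
  if i = 0 then ∅ else if i + 1 = N then {i - 1, i} else {i - 1}

def blockValue (N i : ℕ) : ℕ := ∑ j ∈ digitBlock N i, 2 ^ j

lemma mem_digitBlock {N i j : ℕ} :
    j ∈ digitBlock N i ↔ i ≠ 0 ∧ (j + 1 = i ∨ i + 1 = N ∧ j = i) := by
  unfold digitBlock
  split_ifs <;> simp <;> omega

lemma disjoint_digitBlock {N i i' : ℕ} (hi : i < N) (hi' : i' < N) (h : i ≠ i') :
    Disjoint (digitBlock N i) (digitBlock N i') := by
  rw [Finset.disjoint_left]
  intro j hj hj'
  rw [mem_digitBlock] at hj hj'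
  omega

lemma pred_mem_digitBlock_iff {N i i' : ℕ} (hi : 0 < i) (hiN : i < N) :
    i - 1 ∈ digitBlock N i' ↔ i' = i := by
  rw [mem_digitBlock]
  omega

lemma biUnion_digitBlock_range {N : ℕ} (hN : 2 ≤ N) :
    (range N).biUnion (digitBlock N) = range N := by
  ext j
  simp only [mem_biUnion, mem_range, mem_digitBlock]
  constructor
  · omega
  · intro hj
    by_cases h : j + 1 < N
    · exact ⟨j + 1, by omega⟩
    · exact ⟨j, by omega⟩

lemma biUnion_digitBlock_range_of_lt {N s : ℕ} (hsN : s < N) :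
    (range s).biUnion (digitBlock N) = range (s - 1) := by
  ext j
  simp only [mem_biUnion, mem_range, mem_digitBlock]
  constructor
  · omega
  · exact fun hj => ⟨j + 1, by omega⟩

lemma sum_blockValue {N : ℕ} {U : Finset ℕ} (hU : U ⊆ range N) :
    ∑ i ∈ U, blockValue N i = ∑ j ∈ U.biUnion (digitBlock N), 2 ^ j := by
  rw [sum_biUnion fun i hi i' hi' h =>
    disjoint_digitBlock (mem_range.1 (hU hi)) (mem_range.1 (hU hi')) h]
  rfl

lemma two_pow_pred_le_blockValue {N i : ℕ} (hi : 0 < i) (hiN : i < N) :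
    2 ^ (i - 1) ≤ blockValue N i :=
  single_le_sum (f := (2 ^ ·)) (fun _ _ => Nat.zero_le _) ((pred_mem_digitBlock_iff hi hiN).2 rfl)

lemma eq_of_sum_blockValue_eq {N : ℕ} {U V : Finset ℕ} (hU : U ⊆ range N) (hV : V ⊆ range N)
    (hcard : #U = #V) (h : ∑ i ∈ U, blockValue N i = ∑ i ∈ V, blockValue N i) : U = V := by
  rw [sum_blockValue hU, sum_blockValue hV] at h
  have hblocks := Finset.geomSum_injective le_rfl h
  have pred_mem_iff {W : Finset ℕ} (hW : W ⊆ range N) {i : ℕ} (hi : 0 < i) (hiN : i < N) :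
      i - 1 ∈ W.biUnion (digitBlock N) ↔ i ∈ W := by
    simp [mem_biUnion, pred_mem_digitBlock_iff hi hiN]
  refine eq_of_erase_eq_of_card_eq (a := 0) (Finset.ext fun i => ?_) hcard
  simp only [mem_erase]
  by_cases hiN : i < N
  · by_cases hi : i = 0
    · simp [hi]
    · rw [← pred_mem_iff hU (by omega) hiN, ← pred_mem_iff hV (by omega) hiN, hblocks]
  · have hU' := fun h => hiN (mem_range.1 (hU h))
    have hV' := fun h => hiN (mem_range.1 (hV h))
    tauto

def HasDistinctEqualCardSums {α : Type*} (m : α → ℕ) : Prop :=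
  ∀ S T : Finset α, #S = #T → ∑ a ∈ S, m a = ∑ a ∈ T, m a → S = T

theorem exists_multiplicities {α : Type*} [Fintype α] (A : Finset α) (hA : 0 < #A)
    (hAα : #A < Fintype.card α) :
    ∃ m : α → ℕ, ∑ a, m a = 2 ^ Fintype.card α - 1 ∧ ∑ a ∈ A, m a = 2 ^ (#A - 1) - 1 ∧
      (∀ a ∉ A, ∑ b ∈ A, m b < m a) ∧
      HasDistinctEqualCardSums m := by
  obtain ⟨ι, map_univ, map_A⟩ := A.exists_embedding_map_eq_range
  set N := Fintype.card α
  have sum_eq (S : Finset α) :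
      ∑ a ∈ S, blockValue N (ι a) = ∑ i ∈ S.map ι, blockValue N i :=
    (sum_map S ι _).symm
  have map_subset (S : Finset α) : S.map ι ⊆ range N :=
    map_univ ▸ map_subset_map.2 (subset_univ S)
  have sum_A : ∑ a ∈ A, blockValue N (ι a) = 2 ^ (#A - 1) - 1 := by
    rw [sum_eq, map_A, sum_blockValue (map_A ▸ map_subset A), biUnion_digitBlock_range_of_lt hAα,
      Nat.geomSum_eq le_rfl]
    simp
  refine ⟨fun a => blockValue N (ι a), ?_, sum_A, fun a ha => ?_, fun S T hST h => ?_⟩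
  · rw [sum_eq, map_univ, sum_blockValue subset_rfl, biUnion_digitBlock_range (by omega),
      Nat.geomSum_eq le_rfl]
    simp
  · have hιa : ι a ∈ range N := map_subset univ (mem_map_of_mem ι (mem_univ a))
    have : #A ≤ ι a := not_lt.1 fun h => ha (mem_map' ι |>.1 (map_A ▸ mem_range.2 h))
    rw [sum_A]
    calc 2 ^ (#A - 1) - 1 < 2 ^ (#A - 1) := Nat.sub_one_lt (by positivity)
      _ ≤ 2 ^ (ι a - 1) := Nat.pow_le_pow_right two_pos (by omega)
      _ ≤ blockValue N (ι a) := two_pow_pred_le_blockValue (by omega) (mem_range.1 hιa)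
  · rw [sum_eq, sum_eq] at h
    exact map_injective ι (eq_of_sum_blockValue_eq (map_subset S) (map_subset T) (by simpa) h)

section Projective

variable {F V : Type*} [Field F] [AddCommGroup V] [Module F V]

lemma apply_rep_mk_eq_zero_iff (f : Dual F V) {v : V} (hv : v ≠ 0) :
    f (mk F v hv).rep = 0 ↔ f v = 0 := by
  obtain ⟨a, ha⟩ := exists_smul_eq_mk_rep F v hv
  simp [← ha, Units.smul_def]

lemma range_map_subtype_ker (f : Dual F V) :
    Set.range (map (LinearMap.ker f).subtype (LinearMap.ker f).injective_subtype) =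
      {P | f P.rep = 0} := by
  ext P
  constructor
  · rintro ⟨Q, rfl⟩
    induction Q using Projectivization.ind with | h w hw => ?_
    rw [Set.mem_ofPred_eq, map_mk, apply_rep_mk_eq_zero_iff]
    exact w.2
  · intro hP
    refine ⟨mk F ⟨P.rep, hP⟩ fun h => P.rep_nonzero (congrArg Subtype.val h), ?_⟩
    rw [map_mk]
    exact P.mk_rep

variable [Fintype (ℙ F V)]

noncomputable def nonzeroLocus (f : Dual F V) : Finset (ℙ F V) := {P | f P.rep ≠ 0}

lemma mem_nonzeroLocus {f : Dual F V} {P : ℙ F V} : P ∈ nonzeroLocus f ↔ f P.rep ≠ 0 := by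
  simp [nonzeroLocus]

lemma nonzeroLocus_rep_mk {f : Dual F V} (hf : f ≠ 0) :
    nonzeroLocus (mk F f hf).rep = nonzeroLocus f := by
  obtain ⟨a, ha⟩ := exists_smul_eq_mk_rep F f hf
  ext P
  simp [mem_nonzeroLocus, ← ha, Units.smul_def]

lemma card_nonzeroLocus_add_natCard_ker (f : Dual F V) :
    #(nonzeroLocus f) + Nat.card (ℙ F (LinearMap.ker f)) = Fintype.card (ℙ F V) := by
  have hinj := map_injective (τ := RingHom.id F) _ (LinearMap.ker f).injective_subtype
  rw [← Nat.card_range_of_injective hinj, range_map_subtype_ker, Nat.card_eq_card_toFinset,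
    Set.toFinset_ofPred, nonzeroLocus, ← card_univ]
  simpa only [not_not] using
    card_filter_add_card_filter_not (s := univ) fun P : ℙ F V => f P.rep ≠ 0

lemma card_nonzeroLocus [Finite F] [FiniteDimensional F V] {f : Dual F V} (hf : f ≠ 0) :
    #(nonzeroLocus f) = Nat.card F ^ (finrank F V - 1) := by
  have hker := Dual.finrank_ker_add_one_of_ne_zero hf
  have h := card_nonzeroLocus_add_natCard_ker f
  rw [card_of_finrank F _ rfl, ← Nat.card_eq_fintype_card, card_of_finrank F V rfl, ← hker,
    sum_range_succ] at h
  rw [← hker, Nat.add_sub_cancel]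
  omega

lemma mk_eq_mk_of_nonzeroLocus_eq {f g : Dual F V} (hf : f ≠ 0) (hg : g ≠ 0)
    (h : nonzeroLocus f = nonzeroLocus g) : mk F f hf = mk F g hg := by
  have hker : LinearMap.ker f ≤ LinearMap.ker g := fun v hv => by
    rcases eq_or_ne v 0 with rfl | hv0
    · exact (LinearMap.ker g).zero_mem
    have : mk F v hv0 ∉ nonzeroLocus g := by
      rw [← h, mem_nonzeroLocus, not_not, apply_rep_mk_eq_zero_iff]
      exact hv
    rwa [mem_nonzeroLocus, not_not, apply_rep_mk_eq_zero_iff] at this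
  obtain ⟨a, hag⟩ := Submodule.mem_span_singleton.1 <| by
    simpa using mem_span_of_iInf_ker_le_ker (ι := Unit) (L := fun _ => f) (by simpa using hker)
  exact ((mk_eq_mk_iff' F g f hg hf).2 ⟨a, hag⟩).symm

end Projective

section Code

variable {F V : Type*} [Field F] [AddCommGroup V] [Module F V]

noncomputable def evalCode {ι : Type*} (σ : ι → ℙ F V) : Dual F V →ₗ[F] (ι → F) :=
  LinearMap.pi fun j => Dual.eval F V (σ j).rep

@[simp] lemma evalCode_apply {ι : Type*} (σ : ι → ℙ F V) (f : Dual F V) (j : ι) :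
    evalCode σ f j = f (σ j).rep := rfl

lemma hammingNorm_evalCode {ι : Type*} [Fintype ι] [Fintype (ℙ F V)] (σ : ι → ℙ F V)
    (f : Dual F V) : hammingNorm (evalCode σ f) = ∑ P ∈ nonzeroLocus f, #{j | σ j = P} := by
  rw [hammingNorm, card_eq_sum_card_fiberwise (f := σ) (t := nonzeroLocus f)]
  · refine sum_congr rfl fun P hP => congrArg card (Finset.ext fun j => ?_)
    simp only [mem_filter, mem_univ, true_and, and_iff_right_iff_imp]
    rintro rfl
    exact mem_nonzeroLocus.1 hP
  · intro j hj
    exact mem_nonzeroLocus.2 (mem_filter.1 hj).2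

lemma weightSet_range_eq_image [Fintype F] {W : Type*} [AddCommGroup W] [Module F W]
    [Fintype (ℙ F W)] {n : ℕ} {G : W →ₗ[F] (Fin n → F)} (hG : Function.Injective G) :
    weightSet (LinearMap.range G) = univ.image fun P : ℙ F W => hammingNorm (G P.rep) := by
  ext w
  simp only [weightSet, mem_image, mem_filter, mem_univ, true_and, LinearMap.mem_range]
  constructor
  · rintro ⟨_, ⟨⟨x, rfl⟩, hx⟩, rfl⟩
    have hx0 : x ≠ 0 := by
      rintro rfl
      exact hx (map_zero G)
    obtain ⟨a, ha⟩ := exists_smul_eq_mk_rep F x hx0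
    refine ⟨mk F x hx0, ?_⟩
    rw [← ha, Units.smul_def, map_smul, hammingNorm_smul fun _ => a.isUnit.isSMulRegular _]
  · rintro ⟨P, rfl⟩
    exact ⟨G P.rep, ⟨⟨P.rep, rfl⟩, (map_ne_zero_iff G hG).2 P.rep_nonzero⟩, rfl⟩

end Code

section Construction

variable {F V : Type*} [Field F] [AddCommGroup V] [Module F V]

lemma le_sum_nonzeroLocus [Finite F] [FiniteDimensional F V] [Fintype (ℙ F V)]
    {m : ℙ F V → ℕ} {f₀ : Dual F V} (hf₀ : f₀ ≠ 0) {d : ℕ} (hA : ∑ P ∈ nonzeroLocus f₀, m P = d)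
    (hout : ∀ P ∉ nonzeroLocus f₀, d < m P) {f : Dual F V} (hf : f ≠ 0) :
    d ≤ ∑ P ∈ nonzeroLocus f, m P := by
  by_cases h : nonzeroLocus f = nonzeroLocus f₀
  · rw [h, hA]
  obtain ⟨P, hPf, hPf₀⟩ := not_subset.1 fun hsub =>
    h (eq_of_subset_of_card_le hsub (by rw [card_nonzeroLocus hf, card_nonzeroLocus hf₀]))
  exact (hout P hPf₀).le.trans (single_le_sum (fun _ _ => Nat.zero_le _) hPf)

lemma mk_eq_mk_of_sum_nonzeroLocus_eq [Finite F] [FiniteDimensional F V] [Fintype (ℙ F V)]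
    {m : ℙ F V → ℕ} (hm : HasDistinctEqualCardSums m)
    {f g : Dual F V} (hf : f ≠ 0) (hg : g ≠ 0)
    (h : ∑ P ∈ nonzeroLocus f, m P = ∑ P ∈ nonzeroLocus g, m P) : mk F f hf = mk F g hg :=
  mk_eq_mk_of_nonzeroLocus_eq hf hg <|
    hm _ _ (by rw [card_nonzeroLocus hf, card_nonzeroLocus hg]) h

theorem evalCode_spec [Fintype F] [FiniteDimensional F V] [Fintype (ℙ F V)]
    [Fintype (ℙ F (Dual F V))] {n : ℕ} {σ : Fin n → ℙ F V} {m : ℙ F V → ℕ}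
    (hσ : ∀ P, #{j | σ j = P} = m P)
    (hm : HasDistinctEqualCardSums m)
    {f₀ : Dual F V} (hf₀ : f₀ ≠ 0) {d : ℕ} (hd : 0 < d) (hA : ∑ P ∈ nonzeroLocus f₀, m P = d)
    (hout : ∀ P ∉ nonzeroLocus f₀, d < m P) :
    finrank F (LinearMap.range (evalCode σ)) = finrank F V ∧
      #(weightSet (LinearMap.range (evalCode σ))) = Fintype.card (ℙ F (Dual F V)) ∧
      d ∈ weightSet (LinearMap.range (evalCode σ)) ∧
      ∀ w ∈ weightSet (LinearMap.range (evalCode σ)), d ≤ w := by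
  have hwt (f : Dual F V) : hammingNorm (evalCode σ f) = ∑ P ∈ nonzeroLocus f, m P := by
    simp only [hammingNorm_evalCode, hσ]
  have hmin {f : Dual F V} (hf : f ≠ 0) : d ≤ hammingNorm (evalCode σ f) :=
    hwt f ▸ le_sum_nonzeroLocus hf₀ hA hout hf
  have hinj : Function.Injective (evalCode σ) := by
    refine (injective_iff_map_eq_zero _).2 fun f hf => by_contra fun hf0 => ?_
    have := hmin hf0
    rw [hf, hammingNorm_zero] at this
    omega
  rw [weightSet_range_eq_image hinj, LinearMap.finrank_range_of_inj hinj,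
    Subspace.dual_finrank_eq, card_image_of_injective _ fun P Q h => ?_]
  · refine ⟨rfl, card_univ, mem_image.2 ⟨mk F f₀ hf₀, mem_univ _, ?_⟩, ?_⟩
    · rw [hwt, nonzeroLocus_rep_mk, hA]
    · simp only [mem_image, mem_univ, true_and, forall_exists_index, forall_apply_eq_imp_iff]
      exact fun P => hmin P.rep_nonzero
  · rw [← P.mk_rep, ← Q.mk_rep]
    exact mk_eq_mk_of_sum_nonzeroLocus_eq hm _ _ (by simpa only [hwt] using h)

end Construction

lemma card_projectivization {F V : Type*} [Field F] [AddCommGroup V] [Module F V] [Fintype F]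
    [Module.Finite F V] [Fintype (ℙ F V)] {k : ℕ} (h : finrank F V = k) :
    Fintype.card (ℙ F V) = qk (Fintype.card F) k := by
  rw [← Nat.card_eq_fintype_card, card'', natCard_eq_pow_finrank (K := F), h, qk,
    Nat.card_eq_fintype_card]

lemma pow_pred_lt_qk {q k : ℕ} (hq : 2 ≤ q) (hk : 2 ≤ k) : q ^ (k - 1) < qk q k := by
  obtain ⟨j, rfl⟩ := Nat.exists_eq_add_of_le' hk
  rw [qk, ← Nat.geomSum_eq hq, show j + 2 - 1 = j + 1 by omega, sum_range_succ, sum_range_succ',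
    pow_zero]
  omega

end MWS

open MWS

/-- For every prime power $q$ (i.e. every finite field $F_q$) and every
$k ≥ 2$ there exists an $[n,k,d]_q$ MWS code with $n = 2^{q_k} - 1$ and
$d = 2^{q^{k-1}-1} - 1$. -/
theorem stmt_14 {F : Type*} [Field F] [Fintype F] {k : ℕ} (hk : 2 ≤ k) :
    ∃ C : Submodule F (Fin (2 ^ qk (Fintype.card F) k - 1) → F),
      Module.finrank F C = k ∧
      IsMWS C k ∧
      (2 ^ (Fintype.card F ^ (k - 1) - 1) - 1) ∈ weightSet C ∧
      (∀ w ∈ weightSet C, 2 ^ (Fintype.card F ^ (k - 1) - 1) - 1 ≤ w) := by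
  have hq : 2 ≤ Fintype.card F := Fintype.one_lt_card
  let := Fintype.ofFinite (ℙ F (Fin k → F))
  have : Finite (Dual F (Fin k → F)) := Module.finite_of_finite F
  let := Fintype.ofFinite (ℙ F (Dual F (Fin k → F)))
  have : Nontrivial (Dual F (Fin k → F)) :=
    Module.nontrivial_of_finrank_pos (by rw [Subspace.dual_finrank_eq, finrank_fin_fun]; omega)
  obtain ⟨f₀, hf₀⟩ := exists_ne (0 : Dual F (Fin k → F))
  have hN := card_projectivization (finrank_fin_fun F (n := k))
  have hA : #(nonzeroLocus f₀) = Fintype.card F ^ (k - 1) := by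
    rw [card_nonzeroLocus hf₀, finrank_fin_fun, Nat.card_eq_fintype_card]
  have hs : 2 ≤ Fintype.card F ^ (k - 1) := hq.trans (Nat.le_self_pow (by omega) _)
  obtain ⟨m, htot, hmA, hout, hm⟩ :=
    exists_multiplicities (nonzeroLocus f₀) (by omega) (by rw [hA, hN]; exact pow_pred_lt_qk hq hk)
  rw [hN] at htot
  rw [hA] at hmA
  obtain ⟨σ, hσ⟩ := Fintype.exists_card_fiber_eq m htot
  obtain ⟨hrank, hcard, hmem, hmin⟩ := evalCode_spec hσ hm hf₀
    (Nat.sub_pos_of_lt (Nat.one_lt_two_pow (by omega))) hmA fun P hP => hmA ▸ hout P hP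
  refine ⟨_, hrank.trans (finrank_fin_fun F), ?_, hmem, hmin⟩
  rw [IsMWS, hcard, card_projectivization (by rw [Subspace.dual_finrank_eq, finrank_fin_fun])]
end
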